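/- Let p be a norm on ℝⁿ that is weakly decomposable for an index set S ⊆ {1,…,n}, let X ∈ ℝ^{m×n}, ε ∈ ℝ^m, and β, β̂ ∈ ℝⁿ with supp(β) ⊆ S. Then ⟨ε, X(β̂ − β)⟩ ≤ p_*((Xᵀε)_S) · p(β̂_S − β) + (p^{S̄})_*((Xᵀε)^{S̄}) · p^{S̄}(β̂^{S̄}). -/

import Mathlib

/-!
Transposing `X` turns the left side into `⟪Xᵀε, β̂ - β⟫`, which splits into a sum over `S` and a
sum over `S̄`. Since `β` vanishes off `S`, the two pieces are `⟪(Xᵀε)_S, β̂_S - β⟫` and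
`⟪(Xᵀε)^{S̄}, β̂^{S̄}⟫`, and each is bounded by the Hölder inequality `⟪z, x⟫ ≤ q_*(z) q(x)`.
The supremum defining `q_*` is finite (so not the junk value `sSup = 0` of an unbounded set)
because in finite dimension every norm dominates a positive multiple of the Euclidean one.
-/

open scoped RealInnerProductSpace

noncomputable section

/-- A function `p` is a norm on a real vector space. -/
def IsNorm {E : Type*} [AddCommGroup E] [Module ℝ E] (p : E → ℝ) : Prop :=
  (∀ x y, p (x + y) ≤ p x + p y) ∧ (∀ (c : ℝ) (x : E), p (c • x) = |c| * p x) ∧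
    (∀ x, p x = 0 ↔ x = 0)

/-- The dual norm `q_*(z) = sup {⟨z, β⟩ : q β ≤ 1}`. -/
def dualNorm {ι : Type*} [Fintype ι] (q : EuclideanSpace ℝ ι → ℝ)
    (z : EuclideanSpace ℝ ι) : ℝ :=
  sSup {r : ℝ | ∃ β : EuclideanSpace ℝ ι, q β ≤ 1 ∧ r = ⟪z, β⟫}

/-- `β_S`: the vector agreeing with `β` on `S` and zero on the complement. -/
def projS {n : ℕ} (S : Finset (Fin n)) (β : EuclideanSpace ℝ (Fin n)) :
    EuclideanSpace ℝ (Fin n) :=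
  WithLp.toLp 2 (fun i => if i ∈ S then β i else 0)

/-- `β_{S̄}`: the vector agreeing with `β` on the complement of `S` and zero on `S`. -/
def projSc {n : ℕ} (S : Finset (Fin n)) (β : EuclideanSpace ℝ (Fin n)) :
    EuclideanSpace ℝ (Fin n) :=
  WithLp.toLp 2 (fun i => if i ∈ S then 0 else β i)

/-- `β^{S̄}`: the restriction of `β` to the complement of `S`. -/
def restrC {n : ℕ} (S : Finset (Fin n)) (β : EuclideanSpace ℝ (Fin n)) :
    EuclideanSpace ℝ {i : Fin n // i ∉ S} :=
  WithLp.toLp 2 (fun j => β j.1)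

/-- Matrix-vector multiplication as a map between Euclidean spaces. -/
def mulVecE {m n : ℕ} (X : Matrix (Fin m) (Fin n) ℝ) (β : EuclideanSpace ℝ (Fin n)) :
    EuclideanSpace ℝ (Fin m) :=
  WithLp.toLp 2 (X.mulVec β)

namespace IsNorm

variable {E : Type*}

section AddCommGroup

variable [AddCommGroup E] [Module ℝ E] {q : E → ℝ}

lemma map_zero (hq : IsNorm q) : q 0 = 0 := (hq.2.2 0).mpr rfl

lemma map_neg (hq : IsNorm q) (x : E) : q (-x) = q x := by
  simpa using hq.2.1 (-1) x

lemma nonneg (hq : IsNorm q) (x : E) : 0 ≤ q x := by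
  have h := hq.1 x (-x)
  rw [add_neg_cancel, hq.map_zero, hq.map_neg] at h
  linarith

lemma pos (hq : IsNorm q) {x : E} (hx : x ≠ 0) : 0 < q x :=
  (hq.nonneg x).lt_of_ne fun h => hx ((hq.2.2 x).mp h.symm)

lemma convexOn (hq : IsNorm q) : ConvexOn ℝ Set.univ q := by
  refine ⟨convex_univ, fun x _ y _ a b ha hb _ => ?_⟩
  calc q (a • x + b • y) ≤ q (a • x) + q (b • y) := hq.1 _ _
    _ = a • q x + b • q y := by rw [hq.2.1, hq.2.1, abs_of_nonneg ha, abs_of_nonneg hb]; rfl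

end AddCommGroup

variable [NormedAddCommGroup E] [NormedSpace ℝ E] [FiniteDimensional ℝ E] {q : E → ℝ}

lemma continuous (hq : IsNorm q) : Continuous q :=
  continuousOn_univ.mp (hq.convexOn.continuousOn isOpen_univ)

lemma exists_pos_mul_norm_le (hq : IsNorm q) : ∃ c > 0, ∀ x, c * ‖x‖ ≤ q x := by
  obtain ⟨c, hc, hsphere⟩ := (isCompact_sphere (0 : E) 1).exists_forall_le'
    hq.continuous.continuousOn fun x hx => hq.pos (ne_zero_of_mem_unit_sphere ⟨x, hx⟩)
  refine ⟨c, hc, fun x => ?_⟩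
  rcases eq_or_ne x 0 with rfl | hx
  · simp [hq.map_zero]
  have hxn : 0 < ‖x‖ := norm_pos_iff.mpr hx
  have h := hsphere (‖x‖⁻¹ • x) (by simp [norm_smul, hxn.ne'])
  rw [hq.2.1, abs_of_pos (inv_pos.mpr hxn), le_inv_mul_iff₀ hxn] at h
  linarith

end IsNorm

section DualNorm

variable {ι : Type*} [Fintype ι] {q : EuclideanSpace ℝ ι → ℝ}

lemma IsNorm.bddAbove_inner_unitBall (hq : IsNorm q) (z : EuclideanSpace ℝ ι) :
    BddAbove {r : ℝ | ∃ β : EuclideanSpace ℝ ι, q β ≤ 1 ∧ r = ⟪z, β⟫} := by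
  obtain ⟨c, hc, hlow⟩ := hq.exists_pos_mul_norm_le
  refine ⟨‖z‖ / c, ?_⟩
  rintro _ ⟨β, hβ, rfl⟩
  have hβc : ‖β‖ ≤ 1 / c := by rw [le_div_iff₀ hc, mul_comm]; exact (hlow β).trans hβ
  calc ⟪z, β⟫ ≤ ‖z‖ * ‖β‖ := real_inner_le_norm z β
    _ ≤ ‖z‖ * (1 / c) := by gcongr
    _ = ‖z‖ / c := mul_one_div _ _

lemma IsNorm.inner_le_dualNorm (hq : IsNorm q) (z : EuclideanSpace ℝ ι)
    {β : EuclideanSpace ℝ ι} (hβ : q β ≤ 1) : ⟪z, β⟫ ≤ dualNorm q z :=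
  le_csSup (hq.bddAbove_inner_unitBall z) ⟨β, hβ, rfl⟩

lemma IsNorm.inner_le_dualNorm_mul (hq : IsNorm q) (z x : EuclideanSpace ℝ ι) :
    ⟪z, x⟫ ≤ dualNorm q z * q x := by
  rcases eq_or_ne x 0 with rfl | hx
  · simp [hq.map_zero]
  have hqx := hq.pos hx
  have h := hq.inner_le_dualNorm z (β := (q x)⁻¹ • x)
    (by rw [hq.2.1, abs_of_pos (inv_pos.mpr hqx), inv_mul_cancel₀ hqx.ne'])
  rw [real_inner_smul_right, inv_mul_le_iff₀ hqx] at h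
  linarith

end DualNorm

section Coordinates

variable {m n : ℕ}

lemma inner_mulVecE (X : Matrix (Fin m) (Fin n) ℝ) (ε : EuclideanSpace ℝ (Fin m))
    (v : EuclideanSpace ℝ (Fin n)) : ⟪ε, mulVecE X v⟫ = ⟪mulVecE X.transpose ε, v⟫ := by
  simp only [mulVecE, EuclideanSpace.inner_eq_star_dotProduct, star_trivial,
    Matrix.mulVec_transpose, Matrix.dotProduct_mulVec, dotProduct_comm]

variable (S : Finset (Fin n))

lemma inner_eq_inner_projS_add_inner_restrC (z v : EuclideanSpace ℝ (Fin n)) :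
    ⟪z, v⟫ = ⟪projS S z, projS S v⟫ + ⟪restrC S z, restrC S v⟫ := by
  simp only [projS, restrC, EuclideanSpace.inner_eq_star_dotProduct, star_trivial, dotProduct]
  rw [← Fintype.sum_subtype_add_sum_subtype (· ∈ S)]
  congr 1
  rw [← Finset.sum_subtype S (fun _ => Iff.rfl) (fun i => v i * z i)]
  simp

lemma projS_sub (x y : EuclideanSpace ℝ (Fin n)) : projS S (x - y) = projS S x - projS S y := by
  ext i; by_cases hi : i ∈ S <;> simp [projS, hi]

lemma restrC_sub (x y : EuclideanSpace ℝ (Fin n)) : restrC S (x - y) = restrC S x - restrC S y :=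
  rfl

variable {S}

lemma projS_eq_self {β : EuclideanSpace ℝ (Fin n)} (hsupp : ∀ i, β i ≠ 0 → i ∈ S) :
    projS S β = β := by
  ext i
  by_cases hi : i ∈ S
  · simp [projS, hi]
  · simp [projS, hi, not_imp_comm.mp (hsupp i) hi]

lemma restrC_eq_zero {β : EuclideanSpace ℝ (Fin n)} (hsupp : ∀ i, β i ≠ 0 → i ∈ S) :
    restrC S β = 0 := by
  ext j
  exact not_imp_comm.mp (hsupp j) j.2

end Coordinates

theorem inner_decomposition_bound_general {m n : ℕ} (S : Finset (Fin n))
    (p : EuclideanSpace ℝ (Fin n) → ℝ)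
    (psc : EuclideanSpace ℝ {i : Fin n // i ∉ S} → ℝ)
    (hp : IsNorm p) (hpsc : IsNorm psc)
    (X : Matrix (Fin m) (Fin n) ℝ) (ε : EuclideanSpace ℝ (Fin m))
    (β βh : EuclideanSpace ℝ (Fin n))
    (hsupp : ∀ i, β i ≠ 0 → i ∈ S) :
    ⟪ε, mulVecE X (βh - β)⟫ ≤
      dualNorm p (projS S (mulVecE X.transpose ε)) * p (projS S βh - β) +
        dualNorm psc (restrC S (mulVecE X.transpose ε)) * psc (restrC S βh) := by
  have hS : projS S (βh - β) = projS S βh - β := by rw [projS_sub, projS_eq_self hsupp]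
  have hSc : restrC S (βh - β) = restrC S βh := by
    rw [restrC_sub, restrC_eq_zero hsupp, sub_zero]
  rw [inner_mulVecE, inner_eq_inner_projS_add_inner_restrC S, hS, hSc]
  exact add_le_add (hp.inner_le_dualNorm_mul _ _) (hpsc.inner_le_dualNorm_mul _ _)

/-- generalized Hölder bound
`⟨ε, X(β̂ − β)⟩ ≤ p_*((Xᵀε)_S)·p(β̂_S − β) + (p^{S̄})_*((Xᵀε)^{S̄})·p^{S̄}(β̂^{S̄})`. -/
theorem inner_decomposition_bound {m n : ℕ} (S : Finset (Fin n))
    (p : EuclideanSpace ℝ (Fin n) → ℝ)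
    (psc : EuclideanSpace ℝ {i : Fin n // i ∉ S} → ℝ)
    (hp : IsNorm p) (hpsc : IsNorm psc)
    (hdec : ∀ β : EuclideanSpace ℝ (Fin n), p (projS S β) + psc (restrC S β) ≤ p β)
    (X : Matrix (Fin m) (Fin n) ℝ) (ε : EuclideanSpace ℝ (Fin m))
    (β βh : EuclideanSpace ℝ (Fin n))
    (hsupp : ∀ i, β i ≠ 0 → i ∈ S) :
    ⟪ε, mulVecE X (βh - β)⟫ ≤
      dualNorm p (projS S (mulVecE X.transpose ε)) * p (projS S βh - β) +
        dualNorm psc (restrC S (mulVecE X.transpose ε)) * psc (restrC S βh) :=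
  inner_decomposition_bound_general S p psc hp hpsc X ε β βh hsupp
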